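/- For every b ≥ 1, ∫_b^∞ √(u+b)/(u²+b) du > π − 2·arctan(√b). -/

import Mathlib

open Real MeasureTheory Set Filter Topology

/-! The left-hand side is `∫_b^∞ du / (√u (1 + u))`, since `2 arctan √u` has this integrand as
derivative and tends to `π`. For `u > b` the integrand on the right is strictly larger, because
`√(u + b) ≥ √u` and `u (1 + u) > u ^ 2 + b`. -/

theorem MeasureTheory.setIntegral_lt_setIntegral_of_forall_lt {X : Type*} [MeasurableSpace X]
    {μ : Measure X} {s : Set X} {f g : X → ℝ} (hs : MeasurableSet s) (hμs : μ s ≠ 0)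
    (hf : IntegrableOn f s μ) (hg : IntegrableOn g s μ) (hfg : ∀ x ∈ s, f x < g x) :
    ∫ x in s, f x ∂μ < ∫ x in s, g x ∂μ := by
  rw [← sub_pos, ← integral_sub hg hf,
    setIntegral_pos_iff_support_of_nonneg_ae (f := fun x => g x - f x) _ (hg.sub hf)]
  · have hsupp : Function.support (fun x => g x - f x) ∩ s = s :=
      inter_eq_right.2 fun x hx => (sub_pos.2 (hfg x hx)).ne'
    rwa [hsupp, pos_iff_ne_zero]
  · filter_upwards [ae_restrict_mem hs] with x hx
    exact (sub_pos.2 (hfg x hx)).le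

theorem hasDerivAt_two_mul_arctan_sqrt {u : ℝ} (hu : 0 < u) :
    HasDerivAt (fun x => 2 * arctan √x) (1 / (√u * (1 + u))) u := by
  have h := ((hasDerivAt_arctan √u).comp u (hasDerivAt_sqrt hu.ne')).const_mul 2
  refine h.congr_deriv ?_
  rw [sq_sqrt hu.le]
  field_simp

theorem tendsto_two_mul_arctan_sqrt_atTop :
    Tendsto (fun x => 2 * arctan √x) atTop (𝓝 π) := by
  have h := ((tendsto_arctan_atTop.mono_right nhdsWithin_le_nhds).comp
    tendsto_sqrt_atTop).const_mul 2
  rwa [mul_div_cancel₀ _ two_ne_zero] at h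

theorem integrableOn_Ioi_one_div_sqrt_mul_one_add {a : ℝ} (ha : 0 ≤ a) :
    IntegrableOn (fun u => 1 / (√u * (1 + u))) (Ioi a) :=
  integrableOn_Ioi_deriv_of_nonneg
    (by fun_prop : Continuous fun x => 2 * arctan √x).continuousWithinAt
    (fun u hu => hasDerivAt_two_mul_arctan_sqrt (ha.trans_lt hu))
    (fun u hu => by have := ha.trans_lt hu; positivity) tendsto_two_mul_arctan_sqrt_atTop

theorem integral_Ioi_one_div_sqrt_mul_one_add {a : ℝ} (ha : 0 ≤ a) :
    ∫ u in Ioi a, 1 / (√u * (1 + u)) = π - 2 * arctan √a :=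
  integral_Ioi_of_hasDerivAt_of_tendsto
    (by fun_prop : Continuous fun x => 2 * arctan √x).continuousWithinAt
    (fun u hu => hasDerivAt_two_mul_arctan_sqrt (ha.trans_lt hu))
    (integrableOn_Ioi_one_div_sqrt_mul_one_add ha) tendsto_two_mul_arctan_sqrt_atTop

theorem one_div_sqrt_mul_one_add_lt_sqrt_add_div {b u : ℝ} (hb : 0 ≤ b) (hbu : b < u) :
    1 / (√u * (1 + u)) < √(u + b) / (u ^ 2 + b) := by
  have hu : 0 < u := hb.trans_lt hbu
  have hsqrt : √u ≤ √(u + b) := sqrt_le_sqrt (by linarith)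
  rw [div_lt_div_iff₀ (by positivity) (by positivity), one_mul]
  calc u ^ 2 + b < √u * √u * (1 + u) := by rw [mul_self_sqrt hu.le]; nlinarith
    _ ≤ √(u + b) * (√u * (1 + u)) := by rw [← mul_assoc]; gcongr

theorem sqrt_add_div_le_three_mul_one_div_sqrt_mul_one_add {b u : ℝ} (hb : 0 ≤ b) (hbu : b ≤ u)
    (hu : 1 ≤ u) : √(u + b) / (u ^ 2 + b) ≤ 3 * (1 / (√u * (1 + u))) := by
  have hamgm : 2 * √(u + b) * √u ≤ 2 * u + b := by
    have := two_mul_le_add_sq √(u + b) √u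
    rwa [sq_sqrt (by linarith), sq_sqrt (by linarith : 0 ≤ u), add_right_comm, ← two_mul] at this
  rw [mul_one_div, div_le_div_iff₀ (by positivity) (by positivity)]
  nlinarith [mul_le_mul_of_nonneg_right hamgm (by linarith : (0 : ℝ) ≤ 1 + u)]

theorem integrableOn_Ioi_sqrt_add_div {b : ℝ} (hb : 1 ≤ b) :
    IntegrableOn (fun u => √(u + b) / (u ^ 2 + b)) (Ioi b) := by
  refine ((integrableOn_Ioi_one_div_sqrt_mul_one_add (by linarith)).const_mul 3).mono'
    (ContinuousOn.aestronglyMeasurable (fun u _ => ?_) measurableSet_Ioi) ?_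
  · have : u ^ 2 + b ≠ 0 := by positivity
    fun_prop (disch := assumption)
  · filter_upwards [ae_restrict_mem measurableSet_Ioi] with u hu
    rw [norm_of_nonneg (by positivity)]
    exact sqrt_add_div_le_three_mul_one_div_sqrt_mul_one_add (by linarith) hu.le (hb.trans hu.le)

theorem stmt_10 (b : ℝ) (hb : 1 ≤ b) :
    Real.pi - 2 * Real.arctan (Real.sqrt b) <
      ∫ u in Ioi b, Real.sqrt (u + b) / (u ^ 2 + b) := by
  have hb0 : 0 ≤ b := by linarith
  rw [← integral_Ioi_one_div_sqrt_mul_one_add hb0]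
  exact setIntegral_lt_setIntegral_of_forall_lt measurableSet_Ioi (by simp)
    (integrableOn_Ioi_one_div_sqrt_mul_one_add hb0) (integrableOn_Ioi_sqrt_add_div hb)
    fun u hu => one_div_sqrt_mul_one_add_lt_sqrt_add_div hb0 hu
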